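/- Let λ > 0, let a, b ∈ ℝ, and let ε₁, ε₂ be independent real random variables each with the Gumbel(0, λ) distribution. Then P(a + ε₁ > b + ε₂) = exp(a/λ) / (exp(a/λ) + exp(b/λ)) = 1 / (1 + exp((b − a)/λ)); i.e., pairwise comparisons of Gumbel-perturbed utilities follow the Logistic (Bradley–Terry) model. -/

import Mathlib

open MeasureTheory ProbabilityTheory

/-- The Gumbel(0, λ) distribution on ℝ, given by its density with respect to Lebesgue measure. -/
noncomputable def gumbel (l : ℝ) : Measure ℝ :=
  volume.withDensity fun x => ENNReal.ofReal ((1 / l) * Real.exp (-x / l - Real.exp (-x / l)))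

/-!
Let `F x = exp (-exp (-x / l))` be the Gumbel CDF. A shift only raises it to a power:
`F (x + c) = F x ^ k` with `k = exp (-c / l)`. By independence,
`P (ε₂ < ε₁ + c) = ∫ F (x + c) F' x dx = ∫ F ^ k F' = [F ^ (k + 1) / (k + 1)] = 1 / (1 + k)`,
and `c = a - b` gives the logistic formula.
-/

open Real Filter Set Topology

theorem integrable_deriv_of_nonneg {g g' : ℝ → ℝ} {m M : ℝ}
    (hderiv : ∀ x, HasDerivAt g (g' x) x) (hg' : ∀ x, 0 ≤ g' x)
    (hbot : Tendsto g atBot (𝓝 m)) (htop : Tendsto g atTop (𝓝 M)) : Integrable g' := by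
  have hint (a b : ℝ) : IntervalIntegrable g' volume a b :=
    intervalIntegral.intervalIntegrable_deriv_of_nonneg
      (fun x _ => (hderiv x).continuousAt.continuousWithinAt) (fun x _ => hderiv x)
      (fun x _ => hg' x)
  refine integrable_of_intervalIntegral_norm_tendsto (M - m)
    (fun i => (hint (-i) i).1) tendsto_neg_atTop_atBot tendsto_id ?_
  simp_rw [Real.norm_of_nonneg (hg' _),
    intervalIntegral.integral_eq_sub_of_hasDerivAt (fun x _ => hderiv x) (hint _ _)]
  exact htop.sub (hbot.comp tendsto_neg_atTop_atBot)

/-- `F' * F ^ (k - 1)` for the Gumbel CDF `F x = exp (-exp (-x / l))`. -/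
noncomputable def gumbelWeight (l k x : ℝ) : ℝ := exp (-x / l) * exp (-(k * exp (-x / l))) / l

section GumbelWeight

variable {l k : ℝ}

theorem hasDerivAt_gumbelWeight_antideriv (hk : k ≠ 0) (x : ℝ) :
    HasDerivAt (fun x => exp (-(k * exp (-x / l))) / k) (gumbelWeight l k x) x := by
  have hlin : HasDerivAt (fun x : ℝ => -x / l) (-1 / l) x := (hasDerivAt_neg x).div_const l
  refine (((hlin.exp.const_mul k).neg.exp).div_const k).congr_deriv ?_
  simp only [gumbelWeight, Pi.neg_apply]
  field_simp

theorem tendsto_gumbelWeight_antideriv_atTop (hl : 0 < l) (k : ℝ) :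
    Tendsto (fun x => exp (-(k * exp (-x / l))) / k) atTop (𝓝 (1 / k)) := by
  have hexp : Tendsto (fun x : ℝ => exp (-x / l)) atTop (𝓝 0) :=
    tendsto_exp_atBot.comp ((tendsto_neg_atTop_atBot).atBot_div_const hl)
  simpa using (((hexp.const_mul k).neg).rexp).div_const k

theorem tendsto_gumbelWeight_antideriv_atBot (hl : 0 < l) (hk : 0 < k) :
    Tendsto (fun x => exp (-(k * exp (-x / l))) / k) atBot (𝓝 0) := by
  have hexp : Tendsto (fun x : ℝ => exp (-x / l)) atBot atTop :=
    tendsto_exp_atTop.comp ((tendsto_neg_atBot_atTop).atTop_div_const hl)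
  simpa using (tendsto_exp_atBot.comp
    (tendsto_neg_atTop_atBot.comp (hexp.const_mul_atTop hk))).div_const k

theorem gumbelWeight_nonneg (hl : 0 ≤ l) (k x : ℝ) : 0 ≤ gumbelWeight l k x := by
  unfold gumbelWeight; positivity

theorem integrable_gumbelWeight (hl : 0 < l) (hk : 0 < k) : Integrable (gumbelWeight l k) :=
  integrable_deriv_of_nonneg (hasDerivAt_gumbelWeight_antideriv hk.ne')
    (gumbelWeight_nonneg hl.le k) (tendsto_gumbelWeight_antideriv_atBot hl hk)
    (tendsto_gumbelWeight_antideriv_atTop hl k)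

theorem lintegral_gumbelWeight (hl : 0 < l) (hk : 0 < k) :
    ∫⁻ x, ENNReal.ofReal (gumbelWeight l k x) = ENNReal.ofReal (1 / k) := by
  rw [← ofReal_integral_eq_lintegral_ofReal (integrable_gumbelWeight hl hk)
    (.of_forall (gumbelWeight_nonneg hl.le k)),
    integral_of_hasDerivAt_of_tendsto (hasDerivAt_gumbelWeight_antideriv hk.ne')
      (integrable_gumbelWeight hl hk) (tendsto_gumbelWeight_antideriv_atBot hl hk)
      (tendsto_gumbelWeight_antideriv_atTop hl k), sub_zero]

theorem setLIntegral_Iio_gumbelWeight (hl : 0 < l) (hk : 0 < k) (t : ℝ) :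
    ∫⁻ x in Iio t, ENNReal.ofReal (gumbelWeight l k x) =
      ENNReal.ofReal (exp (-(k * exp (-t / l))) / k) := by
  rw [← ofReal_integral_eq_lintegral_ofReal (integrable_gumbelWeight hl hk).integrableOn
    (.of_forall (gumbelWeight_nonneg hl.le k)), ← integral_Iic_eq_integral_Iio,
    integral_Iic_of_hasDerivAt_of_tendsto' (fun x _ => hasDerivAt_gumbelWeight_antideriv hk.ne' x)
      (integrable_gumbelWeight hl hk).integrableOn (tendsto_gumbelWeight_antideriv_atBot hl hk),
    sub_zero]

end GumbelWeight

theorem gumbel_eq_withDensity_gumbelWeight (l : ℝ) :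
    gumbel l = volume.withDensity fun x => ENNReal.ofReal (gumbelWeight l 1 x) := by
  unfold gumbel gumbelWeight
  congr! 3 with x
  rw [one_mul, ← exp_add]
  ring_nf

theorem gumbel_Iio {l : ℝ} (hl : 0 < l) (t : ℝ) :
    gumbel l (Iio t) = ENNReal.ofReal (exp (-exp (-t / l))) := by
  rw [gumbel_eq_withDensity_gumbelWeight, withDensity_apply _ measurableSet_Iio,
    setLIntegral_Iio_gumbelWeight hl one_pos, one_mul, div_one]

theorem ProbabilityTheory.IndepFun.measure_lt_add {Ω : Type*} [MeasurableSpace Ω] {P : Measure Ω}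
    [IsFiniteMeasure P] {X Y : Ω → ℝ} (hX : Measurable X) (hY : Measurable Y)
    (hXY : IndepFun X Y P) (c : ℝ) :
    P {ω | Y ω < X ω + c} = ∫⁻ x, P.map Y (Iio (x + c)) ∂(P.map X) := by
  have hS : MeasurableSet {p : ℝ × ℝ | p.2 < p.1 + c} :=
    measurableSet_lt (by fun_prop) (by fun_prop)
  rw [show {ω | Y ω < X ω + c} = (fun ω => (X ω, Y ω)) ⁻¹' {p | p.2 < p.1 + c} from rfl,
    ← Measure.map_apply (hX.prodMk hY) hS, hXY.map_prod_eq_prod_map_map hX.aemeasurable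
    hY.aemeasurable, Measure.prod_apply hS]
  rfl

theorem lintegral_gumbel_Iio_add {l : ℝ} (hl : 0 < l) (c : ℝ) :
    ∫⁻ x, gumbel l (Iio (x + c)) ∂gumbel l = ENNReal.ofReal (1 / (1 + exp (-c / l))) := by
  have hshift (x : ℝ) :
      ENNReal.ofReal (gumbelWeight l 1 x) * ENNReal.ofReal (exp (-exp (-(x + c) / l))) =
        ENNReal.ofReal (gumbelWeight l (1 + exp (-c / l)) x) := by
    rw [← ENNReal.ofReal_mul (gumbelWeight_nonneg hl.le 1 x)]
    congr 1
    have hexp : exp (-(x + c) / l) = exp (-c / l) * exp (-x / l) := by rw [← exp_add]; ring_nf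
    simp only [gumbelWeight, hexp]
    rw [mul_div_right_comm, mul_assoc, ← exp_add]
    ring_nf
  simp_rw [gumbel_Iio hl]
  rw [gumbel_eq_withDensity_gumbelWeight, lintegral_withDensity_eq_lintegral_mul _
    (by unfold gumbelWeight; fun_prop) (by fun_prop)]
  simp only [Pi.mul_apply, hshift]
  exact lintegral_gumbelWeight hl (by positivity)

theorem exp_div_exp_add_exp (x y : ℝ) : exp x / (exp x + exp y) = 1 / (1 + exp (y - x)) := by
  rw [exp_sub]
  field_simp

theorem gumbel_pairwise_comparison_logistic
    {Ω : Type*} [MeasurableSpace Ω] (P : Measure Ω) [IsProbabilityMeasure P]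
    (l : ℝ) (hl : 0 < l) (a b : ℝ)
    (ε₁ ε₂ : Ω → ℝ) (hmeas₁ : Measurable ε₁) (hmeas₂ : Measurable ε₂)
    (hindep : IndepFun ε₁ ε₂ P)
    (hdist₁ : Measure.map ε₁ P = gumbel l) (hdist₂ : Measure.map ε₂ P = gumbel l) :
    P {ω | b + ε₂ ω < a + ε₁ ω}
        = ENNReal.ofReal (Real.exp (a / l) / (Real.exp (a / l) + Real.exp (b / l))) ∧
      P {ω | b + ε₂ ω < a + ε₁ ω}
        = ENNReal.ofReal (1 / (1 + Real.exp ((b - a) / l))) := by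
  have hset : {ω | b + ε₂ ω < a + ε₁ ω} = {ω | ε₂ ω < ε₁ ω + (a - b)} := by
    ext ω
    simp only [mem_ofPred_eq]
    constructor <;> intro h <;> linarith
  have hlogistic : P {ω | b + ε₂ ω < a + ε₁ ω} = ENNReal.ofReal (1 / (1 + exp ((b - a) / l))) := by
    rw [hset, hindep.measure_lt_add hmeas₁ hmeas₂, hdist₁, hdist₂, lintegral_gumbel_Iio_add hl,
      neg_sub]
  refine ⟨?_, hlogistic⟩
  rw [hlogistic, exp_div_exp_add_exp, sub_div]
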